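/- arXiv:2602.16690 — 2 statements merged into one kernel-verified Lean document; each statement's English description precedes it below -/
import Mathlib

section
/- Let m be a positive integer, let H_1,…,H_m be null hypotheses with set of true nulls I_0 and m_0 = |I_0|, let α, ε ∈ (0,1), and let weights w_1,…,w_m ≥ 0 satisfy Σ_{j=1}^m w_j = m. Suppose (p_1,…,p_m) are valid p-values (P(p_j ≤ t) ≤ t for all t ∈ [0,1] whenever j ∈ I_0) and (p̃_1,…,p̃_m) are arbitrary [0,1]-valued random variables. If (p_1,…,p_m,p̃_1,…,p̃_m) is positively regression dependent on I_0 with respect to (p_1,…,p_m), then the weighted SynthBH procedure satisfies FDR ≤ (m_0/m)·α + (ε/m)·Σ_{j∈I_0} w_j, and in particular FDR ≤ (m_0/m)·α + ε. -/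
open MeasureTheory

noncomputable section

/-- The synthetic-powered p-value at level `δ`: `p̃^δ = p ∧ (p̃ ∨ (p − δ))`. -/
def sp (p pt δ : ℝ) : ℝ := min p (max pt (p - δ))

/-- The `k`-th smallest element (1-indexed) of a finite family of reals. -/
def kthSmallest {m : ℕ} (v : Fin m → ℝ) (k : ℕ) : ℝ :=
  (List.insertionSort (· ≤ ·) (List.ofFn v)).getD (k - 1) 0

/-- The vector of weighted synthetic-powered p-values `p̃_j^{k w_j ε/m}`. -/
def spVecW (m : ℕ) (ε : ℝ) (w p pt : Fin m → ℝ) (k : ℕ) : Fin m → ℝ :=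
  fun j => sp (p j) (pt j) (k * w j * ε / m)

/-- The weighted SynthBH rejection index
`k* = max {k ∈ [m] : p̃_{(k)}^{k,ε,w} ≤ αk/m}` (0 if none). -/
def kStarW (m : ℕ) (α ε : ℝ) (w p pt : Fin m → ℝ) : ℕ :=
  ((Finset.Icc 1 m).filter
    (fun k => kthSmallest (spVecW m ε w p pt k) k ≤ α * k / m)).sup id

/-- The weighted SynthBH rejection set
`R = {j : p̃_j^{k* w_j ε/m} ≤ p̃_{(k*)}^{k*,ε,w}}` (∅ if `k* = 0`). -/
def rejSetW (m : ℕ) (α ε : ℝ) (w p pt : Fin m → ℝ) : Finset (Fin m) :=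
  if kStarW m α ε w p pt = 0 then ∅
  else Finset.univ.filter (fun j =>
    spVecW m ε w p pt (kStarW m α ε w p pt) j ≤
      kthSmallest (spVecW m ε w p pt (kStarW m α ε w p pt)) (kStarW m α ε w p pt))

/-- A set `A ⊆ ℝ^d` is increasing if `x ∈ A` and `x ⪯ y` coordinatewise imply `y ∈ A`. -/
def IncreasingSet {d : ℕ} (A : Set (Fin d → ℝ)) : Prop :=
  ∀ ⦃x y : Fin d → ℝ⦄, x ∈ A → (∀ i, x i ≤ y i) → y ∈ A

/-- `X` is positively regression dependent on `I` with respect to `Y`. -/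
def PRDSOn {Ω : Type*} [MeasurableSpace Ω] (μ : Measure Ω)
    {d m : ℕ} (X : Ω → (Fin d → ℝ)) (Y : Fin m → Ω → ℝ) (I : Finset (Fin m)) : Prop :=
  ∀ k ∈ I, ∀ A : Set (Fin d → ℝ), IncreasingSet A →
    ∀ ⦃x y : ℝ⦄, x ≤ y → 0 < μ {ω | Y k ω ≤ x} →
      μ ({ω | X ω ∈ A} ∩ {ω | Y k ω ≤ x}) / μ {ω | Y k ω ≤ x} ≤
        μ ({ω | X ω ∈ A} ∩ {ω | Y k ω ≤ y}) / μ {ω | Y k ω ≤ y}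

lemma card_filter_eq_countP {m : ℕ} (v : Fin m → ℝ) (P : ℝ → Prop) [DecidablePred P] :
    (Finset.univ.filter (fun j => P (v j))).card = (List.ofFn v).countP (fun x => decide (P x)) := by
  induction m with
  | zero => simp
  | succ n ih =>
    rw [List.ofFn_succ, List.countP_cons, ← ih (fun j => v j.succ)]
    rw [Finset.card_filter, Finset.card_filter, Fin.sum_univ_succ]
    simp [add_comm]

/-- Number of coordinates of `v` that are `≤ t`. -/
def Ncount {m : ℕ} (v : Fin m → ℝ) (t : ℝ) : ℕ :=
  (Finset.univ.filter (fun j => v j ≤ t)).card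

lemma kthSmallest_le_iff {m : ℕ} (v : Fin m → ℝ) {k : ℕ} (hk1 : 1 ≤ k) (hkm : k ≤ m) (t : ℝ) :
    kthSmallest v k ≤ t ↔ k ≤ Ncount v t := by
  classical
  set l := List.insertionSort (· ≤ ·) (List.ofFn v) with hl
  have hlen : l.length = m := by simp [hl]
  have hsort : l.Pairwise (· ≤ ·) := List.pairwise_insertionSort _ _
  have hperm : l.Perm (List.ofFn v) := List.perm_insertionSort _ _
  have hcount : Ncount v t = l.countP (fun x => decide (x ≤ t)) := by
    rw [Ncount, card_filter_eq_countP v (fun x => x ≤ t), hperm.countP_eq]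
  have hklt : k - 1 < l.length := by omega
  have hget : kthSmallest v k = l.get ⟨k - 1, hklt⟩ := by
    rw [kthSmallest, ← hl, List.getD_eq_getElem (hn := hklt), List.get_eq_getElem]
  rw [hget, hcount]
  constructor
  · intro h
    have h1 : (List.take k l).countP (fun x => decide (x ≤ t)) = k := by
      have hall : ∀ a ∈ List.take k l, decide (a ≤ t) = true := by
        intro a ha
        rw [List.mem_iff_getElem] at ha
        obtain ⟨i, hi, rfl⟩ := ha
        simp only [List.getElem_take]
        have hik : i ≤ k - 1 := by simp [hlen] at hi; omega
        have hilt : i < l.length := by simp [hlen] at hi ⊢; omega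
        have hmono := hsort.rel_get_of_le (a := ⟨i, hilt⟩) (b := ⟨k-1, hklt⟩) (by simpa using hik)
        simp only [List.get_eq_getElem] at hmono h
        simp only [decide_eq_true_eq]
        exact hmono.trans h
      rw [List.countP_eq_length.mpr hall, List.length_take, hlen, Nat.min_eq_left hkm]
    calc k = (List.take k l).countP (fun x => decide (x ≤ t)) := h1.symm
    _ ≤ (List.take k l).countP (fun x => decide (x ≤ t))
          + (List.drop k l).countP (fun x => decide (x ≤ t)) := Nat.le_add_right _ _
    _ = l.countP (fun x => decide (x ≤ t)) := by rw [← List.countP_append, List.take_append_drop]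
  · intro h
    by_contra hnot
    push_neg at hnot
    have h0 : (List.drop (k-1) l).countP (fun x => decide (x ≤ t)) = 0 := by
      rw [List.countP_eq_zero]
      intro a ha
      rw [List.mem_iff_getElem] at ha
      obtain ⟨i, hi, rfl⟩ := ha
      simp only [List.getElem_drop, decide_eq_true_eq, not_le]
      have hlt : k - 1 + i < l.length := by simp [hlen] at hi ⊢; omega
      have hle := hsort.rel_get_of_le (a := ⟨k-1, hklt⟩) (b := ⟨k-1+i, hlt⟩) (by simp)
      simp only [List.get_eq_getElem] at hle hnot
      exact lt_of_lt_of_le hnot hle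
    have : l.countP (fun x => decide (x ≤ t))
        = (List.take (k-1) l).countP (fun x => decide (x ≤ t)) := by
      conv_lhs => rw [← List.take_append_drop (k-1) l]
      rw [List.countP_append, h0, Nat.add_zero]
    have hlenle : (List.take (k-1) l).countP (fun x => decide (x ≤ t))
        ≤ (List.take (k-1) l).length := List.countP_le_length
    have : l.countP (fun x => decide (x ≤ t)) ≤ k - 1 := by
      rw [this]; exact hlenle.trans (by simp [hlen])
    omega

lemma Ncount_anti {m : ℕ} {v v' : Fin m → ℝ} (h : ∀ j, v j ≤ v' j) (t : ℝ) :
    Ncount v' t ≤ Ncount v t := by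
  apply Finset.card_le_card
  intro j hj
  simp only [Finset.mem_filter, Finset.mem_univ, true_and] at hj ⊢
  exact (h j).trans hj

lemma le_Ncount_kthSmallest {m : ℕ} (v : Fin m → ℝ) {k : ℕ} (hk1 : 1 ≤ k) (hkm : k ≤ m) :
    k ≤ Ncount v (kthSmallest v k) := (kthSmallest_le_iff v hk1 hkm _).mp le_rfl

lemma kthSmallest_mono {m : ℕ} {v v' : Fin m → ℝ} (h : ∀ j, v j ≤ v' j) {k : ℕ}
    (hk1 : 1 ≤ k) (hkm : k ≤ m) : kthSmallest v k ≤ kthSmallest v' k := by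
  rw [kthSmallest_le_iff v hk1 hkm]
  exact le_trans (le_Ncount_kthSmallest v' hk1 hkm) (Ncount_anti h _)

lemma sp_mono {p p' pt pt' δ : ℝ} (h1 : p ≤ p') (h2 : pt ≤ pt') :
    sp p pt δ ≤ sp p' pt' δ := by
  unfold sp
  exact min_le_min h1 (max_le_max h2 (by linarith))

lemma le_sp_add {p pt δ : ℝ} (hδ : 0 ≤ δ) : p ≤ sp p pt δ + δ := by
  unfold sp
  rcases le_total p (max pt (p - δ)) with h | h
  · rw [min_eq_left h]; linarith
  · rw [min_eq_right h]
    have := le_max_right pt (p - δ)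
    linarith [le_max_right pt (p - δ)]

lemma spVecW_mono (m : ℕ) (ε : ℝ) (w : Fin m → ℝ) {p p' pt pt' : Fin m → ℝ}
    (h1 : ∀ j, p j ≤ p' j) (h2 : ∀ j, pt j ≤ pt' j) (k : ℕ) (j : Fin m) :
    spVecW m ε w p pt k j ≤ spVecW m ε w p' pt' k j := sp_mono (h1 j) (h2 j)

lemma kStarW_le (m : ℕ) (α ε : ℝ) (w p pt : Fin m → ℝ) : kStarW m α ε w p pt ≤ m := by
  apply Finset.sup_le
  intro b hb
  simp only [Finset.mem_filter, Finset.mem_Icc] at hb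
  exact hb.1.2

lemma kStarW_mem {m : ℕ} {α ε : ℝ} {w p pt : Fin m → ℝ} (h : kStarW m α ε w p pt ≠ 0) :
    1 ≤ kStarW m α ε w p pt ∧ kStarW m α ε w p pt ≤ m ∧
      kthSmallest (spVecW m ε w p pt (kStarW m α ε w p pt)) (kStarW m α ε w p pt)
        ≤ α * (kStarW m α ε w p pt) / m := by
  classical
  set S := ((Finset.Icc 1 m).filter
    (fun k => kthSmallest (spVecW m ε w p pt k) k ≤ α * k / m)) with hS
  have hne : S.Nonempty := by
    by_contra hc
    rw [Finset.not_nonempty_iff_eq_empty] at hc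
    apply h
    rw [kStarW, ← hS, hc, Finset.sup_empty]
    rfl
  obtain ⟨i, hi, hsup⟩ := Finset.exists_mem_eq_sup S hne id
  have hk : kStarW m α ε w p pt ∈ S := by rw [kStarW, ← hS, hsup]; exact hi
  simp only [hS, Finset.mem_filter, Finset.mem_Icc] at hk
  exact ⟨hk.1.1, hk.1.2, hk.2⟩

lemma le_kStarW_iff {m : ℕ} {α ε : ℝ} {w p pt : Fin m → ℝ} {k : ℕ} (hk : 1 ≤ k) :
    k ≤ kStarW m α ε w p pt ↔ ∃ k', (1 ≤ k' ∧ k' ≤ m) ∧ k ≤ k' ∧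
      kthSmallest (spVecW m ε w p pt k') k' ≤ α * k' / m := by
  constructor
  · intro h
    have hne : kStarW m α ε w p pt ≠ 0 := by omega
    obtain ⟨h1, h2, h3⟩ := kStarW_mem hne
    exact ⟨kStarW m α ε w p pt, ⟨h1, h2⟩, h, h3⟩
  · rintro ⟨k', ⟨h1, h2⟩, h3, h4⟩
    calc k ≤ k' := h3
    _ = id k' := rfl
    _ ≤ kStarW m α ε w p pt := Finset.le_sup (by
        simp only [Finset.mem_filter, Finset.mem_Icc]
        exact ⟨⟨h1, h2⟩, h4⟩)

lemma kStarW_anti (m : ℕ) (α ε : ℝ) (w : Fin m → ℝ) {p p' pt pt' : Fin m → ℝ}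
    (h1 : ∀ j, p j ≤ p' j) (h2 : ∀ j, pt j ≤ pt' j) :
    kStarW m α ε w p' pt' ≤ kStarW m α ε w p pt := by
  apply Finset.sup_mono
  intro k hk
  simp only [Finset.mem_filter, Finset.mem_Icc] at hk ⊢
  exact ⟨hk.1, le_trans (kthSmallest_mono (fun j => spVecW_mono m ε w h1 h2 k j) hk.1.1 hk.1.2) hk.2⟩

lemma kStarW_le_card_rejSetW (m : ℕ) (α ε : ℝ) (w p pt : Fin m → ℝ) :
    kStarW m α ε w p pt ≤ (rejSetW m α ε w p pt).card := by
  by_cases h : kStarW m α ε w p pt = 0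
  · simp [h]
  · obtain ⟨h1, h2, _⟩ := kStarW_mem h
    rw [rejSetW, if_neg h]
    exact le_Ncount_kthSmallest _ h1 h2

lemma mem_rejSetW {m : ℕ} {α ε : ℝ} {w p pt : Fin m → ℝ} {j : Fin m}
    (hε : 0 ≤ ε) (hwj : 0 ≤ w j) (hj : j ∈ rejSetW m α ε w p pt) :
    kStarW m α ε w p pt ≠ 0 ∧
      p j ≤ α * (kStarW m α ε w p pt) / m + (kStarW m α ε w p pt) * w j * ε / m := by
  by_cases h : kStarW m α ε w p pt = 0
  · rw [rejSetW, if_pos h] at hj; exact absurd hj (Finset.notMem_empty j)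
  · refine ⟨h, ?_⟩
    rw [rejSetW, if_neg h, Finset.mem_filter] at hj
    obtain ⟨_, h2, h3⟩ := kStarW_mem h
    have hδ : (0:ℝ) ≤ (kStarW m α ε w p pt) * w j * ε / m := by positivity
    have := le_sp_add (p := p j) (pt := pt j) hδ
    calc p j ≤ sp (p j) (pt j) ((kStarW m α ε w p pt) * w j * ε / m)
        + (kStarW m α ε w p pt) * w j * ε / m := this
    _ ≤ α * (kStarW m α ε w p pt) / m + (kStarW m α ε w p pt) * w j * ε / m := by
        have : spVecW m ε w p pt (kStarW m α ε w p pt) j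
            ≤ α * (kStarW m α ε w p pt) / m := le_trans hj.2 h3
        rw [spVecW] at this
        linarith

section Meas
variable {Ω : Type*} [MeasurableSpace Ω] {m : ℕ} {α ε : ℝ} {w : Fin m → ℝ}
  {p pt : Fin m → Ω → ℝ}

lemma meas_spVecW (hp : ∀ j, Measurable (p j)) (hpt : ∀ j, Measurable (pt j)) (k : ℕ) (j : Fin m) :
    Measurable (fun ω => spVecW m ε w (fun j' => p j' ω) (fun j' => pt j' ω) k j) := by
  unfold spVecW sp
  exact ((hp j).min ((hpt j).max ((hp j).sub measurable_const)))

lemma meas_Ncount (hp : ∀ j, Measurable (p j)) (hpt : ∀ j, Measurable (pt j)) (k : ℕ) (c : ℝ) :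
    Measurable (fun ω => Ncount (spVecW m ε w (fun j' => p j' ω) (fun j' => pt j' ω) k) c) := by
  have : (fun ω => Ncount (spVecW m ε w (fun j' => p j' ω) (fun j' => pt j' ω) k) c)
      = fun ω => ∑ j : Fin m,
        if spVecW m ε w (fun j' => p j' ω) (fun j' => pt j' ω) k j ≤ c then 1 else 0 := by
    funext ω
    rw [Ncount, Finset.card_filter]
  rw [this]
  apply Finset.measurable_sum
  intro j _
  exact Measurable.ite (measurableSet_le (meas_spVecW hp hpt k j) measurable_const)
    measurable_const measurable_const

lemma meas_NcountSet (hp : ∀ j, Measurable (p j)) (hpt : ∀ j, Measurable (pt j))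
    (k k' : ℕ) (c : ℝ) :
    MeasurableSet {ω | k' ≤ Ncount (spVecW m ε w (fun j' => p j' ω) (fun j' => pt j' ω) k) c} := by
  have : {ω | k' ≤ Ncount (spVecW m ε w (fun j' => p j' ω) (fun j' => pt j' ω) k) c}
      = (fun ω => Ncount (spVecW m ε w (fun j' => p j' ω) (fun j' => pt j' ω) k) c) ⁻¹'
        (Set.Ici k') := rfl
  rw [this]
  exact meas_Ncount hp hpt k c measurableSet_Ici

lemma meas_kth (hp : ∀ j, Measurable (p j)) (hpt : ∀ j, Measurable (pt j)) {k : ℕ}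
    (hk1 : 1 ≤ k) (hkm : k ≤ m) :
    Measurable (fun ω => kthSmallest (spVecW m ε w (fun j' => p j' ω) (fun j' => pt j' ω) k) k) := by
  apply measurable_of_Iic
  intro c
  have : (fun ω => kthSmallest (spVecW m ε w (fun j' => p j' ω) (fun j' => pt j' ω) k) k) ⁻¹'
      (Set.Iic c) = {ω | k ≤ Ncount (spVecW m ε w (fun j' => p j' ω) (fun j' => pt j' ω) k) c} := by
    ext ω
    simp only [Set.mem_preimage, Set.mem_Iic, Set.mem_setOf_eq]
    exact kthSmallest_le_iff _ hk1 hkm c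
  rw [this]
  exact meas_NcountSet hp hpt k k c

lemma meas_E (hp : ∀ j, Measurable (p j)) (hpt : ∀ j, Measurable (pt j)) (α : ℝ) (k : ℕ) :
    MeasurableSet {ω | k ≤ kStarW m α ε w (fun j' => p j' ω) (fun j' => pt j' ω)} := by
  rcases Nat.eq_zero_or_pos k with hk | hk
  · subst hk
    simp only [Nat.zero_le, Set.setOf_true]
    exact MeasurableSet.univ
  · have : {ω | k ≤ kStarW m α ε w (fun j' => p j' ω) (fun j' => pt j' ω)}
        = ⋃ k' ∈ Finset.Icc k m, {ω | k' ≤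
            Ncount (spVecW m ε w (fun j' => p j' ω) (fun j' => pt j' ω) k') (α * k' / m)} := by
      ext ω
      simp only [Set.mem_iUnion, Set.mem_setOf_eq, Finset.mem_Icc, exists_prop]
      rw [le_kStarW_iff hk]
      constructor
      · rintro ⟨k', ⟨h1, h2⟩, h3, h4⟩
        exact ⟨k', ⟨h3, h2⟩, (kthSmallest_le_iff _ h1 h2 _).mp h4⟩
      · rintro ⟨k', ⟨h3, h2⟩, h4⟩
        have h1 : 1 ≤ k' := le_trans hk h3
        exact ⟨k', ⟨h1, h2⟩, h3, (kthSmallest_le_iff _ h1 h2 _).mpr h4⟩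
    rw [this]
    exact (Finset.Icc k m).measurableSet_biUnion (fun k' _ => meas_NcountSet hp hpt k' k' _)

lemma meas_memR (hp : ∀ j, Measurable (p j)) (hpt : ∀ j, Measurable (pt j)) (α : ℝ) (j : Fin m) :
    MeasurableSet {ω | j ∈ rejSetW m α ε w (fun j' => p j' ω) (fun j' => pt j' ω)} := by
  classical
  have heq : {ω | j ∈ rejSetW m α ε w (fun j' => p j' ω) (fun j' => pt j' ω)}
      = ⋃ k ∈ Finset.Icc 1 m,
        (({ω | k ≤ kStarW m α ε w (fun j' => p j' ω) (fun j' => pt j' ω)}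
          \ {ω | k + 1 ≤ kStarW m α ε w (fun j' => p j' ω) (fun j' => pt j' ω)})
        ∩ {ω | spVecW m ε w (fun j' => p j' ω) (fun j' => pt j' ω) k j
            ≤ kthSmallest (spVecW m ε w (fun j' => p j' ω) (fun j' => pt j' ω) k) k}) := by
    ext ω
    simp only [Set.mem_iUnion, Set.mem_setOf_eq, Finset.mem_Icc, exists_prop, Set.mem_inter_iff,
      Set.mem_diff, Set.mem_setOf_eq]
    constructor
    · intro hmem
      have h0 : kStarW m α ε w (fun j' => p j' ω) (fun j' => pt j' ω) ≠ 0 := by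
        intro hc
        rw [rejSetW, if_pos hc] at hmem
        exact absurd hmem (Finset.notMem_empty j)
      obtain ⟨h1, h2, _⟩ := kStarW_mem h0
      rw [rejSetW, if_neg h0, Finset.mem_filter] at hmem
      exact ⟨kStarW m α ε w (fun j' => p j' ω) (fun j' => pt j' ω), ⟨h1, h2⟩,
        ⟨le_rfl, by omega⟩, hmem.2⟩
    · rintro ⟨k, ⟨h1, h2⟩, ⟨h3, h4⟩, h5⟩
      have hkeq : kStarW m α ε w (fun j' => p j' ω) (fun j' => pt j' ω) = k := by omega
      have h0 : kStarW m α ε w (fun j' => p j' ω) (fun j' => pt j' ω) ≠ 0 := by omega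
      rw [rejSetW, if_neg h0, Finset.mem_filter, hkeq]
      exact ⟨Finset.mem_univ j, h5⟩
  rw [heq]
  apply (Finset.Icc 1 m).measurableSet_biUnion
  intro k hk
  simp only [Finset.mem_Icc] at hk
  exact ((meas_E hp hpt α k).diff (meas_E hp hpt α (k+1))).inter
    (measurableSet_le (meas_spVecW hp hpt k j) (meas_kth hp hpt hk.1 hk.2))

lemma meas_Req (hp : ∀ j, Measurable (p j)) (hpt : ∀ j, Measurable (pt j)) (α : ℝ)
    (S : Finset (Fin m)) :
    MeasurableSet {ω | rejSetW m α ε w (fun j' => p j' ω) (fun j' => pt j' ω) = S} := by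
  classical
  have heq : {ω | rejSetW m α ε w (fun j' => p j' ω) (fun j' => pt j' ω) = S}
      = ⋂ j : Fin m, (if j ∈ S
          then {ω | j ∈ rejSetW m α ε w (fun j' => p j' ω) (fun j' => pt j' ω)}
          else {ω | j ∈ rejSetW m α ε w (fun j' => p j' ω) (fun j' => pt j' ω)}ᶜ) := by
    ext ω
    simp only [Set.mem_iInter, Set.mem_setOf_eq]
    constructor
    · intro h j
      by_cases hj : j ∈ S <;> simp [hj, h, Set.mem_compl_iff]
    · intro h
      ext j
      have := h j
      by_cases hj : j ∈ S <;> simp [hj] at this <;> simp [hj, this]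
  rw [heq]
  apply MeasurableSet.iInter
  intro j
  by_cases hj : j ∈ S
  · simpa [hj] using meas_memR hp hpt α j
  · simpa [hj] using (meas_memR hp hpt α j).compl

end Meas

/-- The event `{k* ≥ k}`. -/
def Eset {Ω : Type*} (m : ℕ) (α ε : ℝ) (w : Fin m → ℝ) (p pt : Fin m → Ω → ℝ) (k : ℕ) :
    Set Ω := {ω | k ≤ kStarW m α ε w (fun j => p j ω) (fun j => pt j ω)}

section Step3

variable {Ω : Type*} [MeasurableSpace Ω] (μ : Measure Ω) [IsProbabilityMeasure μ]
  {m : ℕ} {α ε : ℝ} {w : Fin m → ℝ} {p pt : Fin m → Ω → ℝ}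

lemma step3 (hm : 0 < m) (hα : α ∈ Set.Ioo (0:ℝ) 1) (hε : ε ∈ Set.Ioo (0:ℝ) 1)
    (hw : ∀ j, 0 ≤ w j)
    (hpmeas : ∀ j, Measurable (p j)) (hptmeas : ∀ j, Measurable (pt j))
    (I0 : Finset (Fin m))
    (hvalid : ∀ j ∈ I0, ∀ t ∈ Set.Icc (0 : ℝ) 1, μ {ω | p j ω ≤ t} ≤ ENNReal.ofReal t)
    (hprds : PRDSOn μ (fun ω => Fin.append (fun j => p j ω) (fun j => pt j ω)) p I0)
    (j : Fin m) (hj : j ∈ I0) :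
    ∑ i ∈ Finset.range m,
      (μ ({ω | p j ω ≤ (α + w j * ε) / m * ((i:ℝ)+1)} ∩
        (Eset m α ε w p pt (i+1) \ Eset m α ε w p pt (i+2)))).toReal * (1/((i:ℝ)+1))
      ≤ (α + w j * ε) / m := by
  classical
  set q : ℝ := (α + w j * ε) / m with hqdef
  have hq : 0 < q := by
    apply div_pos
    · nlinarith [hα.1, hε.1, hw j]
    · exact_mod_cast hm
  set T : ℕ → Set Ω := fun k => {ω | p j ω ≤ q * (k:ℝ)} with hTdef
  set E : ℕ → Set Ω := fun k => Eset m α ε w p pt k with hEdef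
  have hTmeas : ∀ k, MeasurableSet (T k) := fun k => (hpmeas j) measurableSet_Iic
  have hEmeas : ∀ k, MeasurableSet (E k) := fun k => meas_E hpmeas hptmeas α k
  have hTsub : ∀ k, T k ⊆ T (k+1) := by
    intro k ω hω
    simp only [hTdef, Set.mem_setOf_eq] at hω ⊢
    push_cast
    nlinarith [hq]
  have hEsub : ∀ k, E (k+1) ⊆ E k := by
    intro k ω hω
    simp only [hEdef, Eset, Set.mem_setOf_eq] at hω ⊢
    omega
  set A : ℕ → ℝ := fun k => (μ (T k ∩ E k)).toReal with hAdef
  set B : ℕ → ℝ := fun k => (μ (T k ∩ E (k+1))).toReal with hBdef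
  set P : ℕ → ℝ := fun k => (μ (T k)).toReal with hPdef
  set ρ : ℕ → ℝ := fun k => if P k = 0 then 1 else A k / P k with hρdef
  have hPnonneg : ∀ k, 0 ≤ P k := fun k => ENNReal.toReal_nonneg
  have hAP : ∀ k, A k ≤ P k := fun k =>
    ENNReal.toReal_mono (measure_ne_top μ _) (measure_mono Set.inter_subset_left)
  have hBA : ∀ k, B k ≤ A k := fun k =>
    ENNReal.toReal_mono (measure_ne_top μ _)
      (measure_mono (Set.inter_subset_inter_right _ (hEsub k)))
  have hBnonneg : ∀ k, 0 ≤ B k := fun k => ENNReal.toReal_nonneg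
  have hρle1 : ∀ k, ρ k ≤ 1 := by
    intro k
    simp only [hρdef]
    split_ifs with h
    · exact le_rfl
    · rw [div_le_one (lt_of_le_of_ne (hPnonneg k) (Ne.symm h))]
      exact hAP k
  have hρ0 : ∀ k, 0 ≤ ρ k := by
    intro k
    simp only [hρdef]
    split_ifs with h
    · exact zero_le_one
    · exact div_nonneg ENNReal.toReal_nonneg (hPnonneg k)
  have hPq : ∀ k : ℕ, P k ≤ q * k := by
    intro k
    rcases le_or_gt (q * k) 1 with h | h
    · refine ENNReal.toReal_le_of_le_ofReal (by positivity) ?_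
      exact hvalid j hj (q * k) ⟨by positivity, h⟩
    · have h1 : P k ≤ 1 :=
        ENNReal.toReal_le_of_le_ofReal zero_le_one (by simpa using prob_le_one)
      linarith
  -- main per-term bound
  have hkey : ∀ i ∈ Finset.range m,
      (μ (T (i+1) ∩ (E (i+1) \ E (i+2)))).toReal * (1/((i:ℝ)+1))
        ≤ q * (ρ (i+1) - ρ (i+2)) := by
    intro i _
    set k : ℕ := i + 1 with hkdef
    have hk0 : (0:ℝ) < (k:ℝ) := by positivity
    have hkcast : ((i:ℝ)+1) = (k:ℝ) := by push_cast [hkdef]; ring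
    -- μ(T k ∩ (E k \ E (k+1))).toReal = A k - B k
    have hdiffeq : T k ∩ (E k \ E (k+1)) = (T k ∩ E k) \ (T k ∩ E (k+1)) := by
      ext ω
      simp only [Set.mem_inter_iff, Set.mem_diff, Set.mem_inter_iff]
      tauto
    have hmeasS : (μ (T k ∩ (E k \ E (k+1)))).toReal = A k - B k := by
      rw [hdiffeq, measure_diff (Set.inter_subset_inter_right _ (hEsub k))
        ((hTmeas k).inter (hEmeas (k+1))).nullMeasurableSet (measure_ne_top μ _),
        ENNReal.toReal_sub_of_le (measure_mono (Set.inter_subset_inter_right _ (hEsub k)))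
          (measure_ne_top μ _)]
    rw [hmeasS, hkcast]
    by_cases hPk : P k = 0
    · have hμT : μ (T k) = 0 := by
        rw [hPdef] at hPk
        rcases (ENNReal.toReal_eq_zero_iff _).mp hPk with h | h
        · exact h
        · exact absurd h (measure_ne_top μ _)
      have hA0 : A k = 0 := by
        rw [hAdef]
        simp [measure_inter_null_of_null_left (E k) hμT]
      have hB0 : B k = 0 := by
        rw [hBdef]
        simp [measure_inter_null_of_null_left (E (k+1)) hμT]
      rw [hA0, hB0]
      have hρk : ρ k = 1 := by simp [hρdef, hPk]
      rw [hρk]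
      have := hρle1 (k+1)
      nlinarith [hq]
    · -- positive case: use PRDS
      have hPkpos : 0 < P k := lt_of_le_of_ne (hPnonneg k) (Ne.symm hPk)
      have hPk1 : P k ≤ P (k+1) :=
        ENNReal.toReal_mono (measure_ne_top μ _) (measure_mono (hTsub k))
      have hPk1pos : 0 < P (k+1) := lt_of_lt_of_le hPkpos hPk1
      have hμTk_ne : μ (T k) ≠ 0 := by
        intro h
        have : P k = 0 := by simp [hPdef, h]
        exact hPk this
      have hμTk1_ne : μ (T (k+1)) ≠ 0 := by
        intro h
        have : μ (T k) = 0 := le_antisymm (h ▸ measure_mono (hTsub k)) zero_le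
        exact hμTk_ne this
      -- increasing set
      set Aset : Set (Fin (m+m) → ℝ) := {v | kStarW m α ε w
        (fun j' => v (Fin.castAdd m j')) (fun j' => v (Fin.natAdd m j')) ≤ k} with hAsetdef
      have hIncr : IncreasingSet Aset := by
        intro x y hx hxy
        simp only [hAsetdef, Set.mem_setOf_eq] at hx ⊢
        exact le_trans (kStarW_anti m α ε w (fun j' => hxy _) (fun j' => hxy _)) hx
      have hxy : q * (k:ℝ) ≤ q * ((k+1:ℕ):ℝ) := by
        push_cast
        nlinarith [hq]
      have hTkx : {ω | p j ω ≤ q * (k:ℝ)} = T k := rfl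
      have hμpos : 0 < μ {ω | p j ω ≤ q * (k:ℝ)} := by
        rw [hTkx]
        exact lt_of_le_of_ne zero_le (Ne.symm hμTk_ne)
      have happ := hprds j hj Aset hIncr hxy hμpos
      have hXA : {ω | (Fin.append (fun j' => p j' ω) (fun j' => pt j' ω)) ∈ Aset}
          = (E (k+1))ᶜ := by
        ext ω
        simp only [hAsetdef, Set.mem_setOf_eq, Set.mem_compl_iff, hEdef, Eset,
          Fin.append_left, Fin.append_right]
        omega
      rw [hXA, hTkx] at happ
      have hTk1x : {ω | p j ω ≤ q * ((k+1:ℕ):ℝ)} = T (k+1) := rfl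
      rw [hTk1x] at happ
      -- rewrite complements
      have hcompl : ∀ k' k'' : ℕ, μ ((E k'')ᶜ ∩ T k') = μ (T k') - μ (T k' ∩ E k'') := by
        intro k' k''
        have : (E k'')ᶜ ∩ T k' = T k' \ (T k' ∩ E k'') := by
          rw [Set.diff_self_inter, Set.diff_eq, Set.inter_comm]
        rw [this, measure_diff Set.inter_subset_left
          ((hTmeas k').inter (hEmeas k'')).nullMeasurableSet (measure_ne_top μ _)]
      rw [hcompl k (k+1), hcompl (k+1) (k+1)] at happ
      -- convert to real
      have hfin : (μ (T (k+1)) - μ (T (k+1) ∩ E (k+1))) / μ (T (k+1)) ≠ ⊤ := by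
        intro htop
        rcases ENNReal.div_eq_top.mp htop with ⟨_, h2⟩ | ⟨h1, _⟩
        · exact hμTk1_ne h2
        · exact ENNReal.sub_ne_top (measure_ne_top μ _) h1
      have happR := ENNReal.toReal_mono hfin happ
      rw [ENNReal.toReal_div, ENNReal.toReal_div,
        ENNReal.toReal_sub_of_le (measure_mono Set.inter_subset_left) (measure_ne_top μ _),
        ENNReal.toReal_sub_of_le (measure_mono Set.inter_subset_left) (measure_ne_top μ _)]
        at happR
      -- happR : (P k - B k)/(P k) ≤ (P (k+1) - A (k+1))/(P (k+1))
      have hratio : A (k+1) / P (k+1) ≤ B k / P k := by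
        rw [div_le_div_iff₀ hPk1pos hPkpos]
        rw [div_le_div_iff₀ hPkpos hPk1pos] at happR
        nlinarith [happR]
      have hρk : ρ k = A k / P k := by simp [hρdef, hPk]
      have hρk1 : ρ (k+1) = A (k+1) / P (k+1) := by
        have : P (k+1) ≠ 0 := ne_of_gt hPk1pos
        simp [hρdef, this]
      rw [hρk, hρk1]
      have h5 : (A k - B k) * (1/(k:ℝ)) ≤ q * ((A k - B k) / P k) := by
        rw [mul_one_div, ← mul_div_assoc]
        rw [div_le_div_iff₀ hk0 hPkpos]
        have hABnn : 0 ≤ A k - B k := by linarith [hBA k]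
        nlinarith [hPq k]
      calc (A k - B k) * (1/(k:ℝ)) ≤ q * ((A k - B k) / P k) := h5
      _ = q * (A k / P k - B k / P k) := by rw [sub_div]
      _ ≤ q * (A k / P k - A (k+1) / P (k+1)) := by
          apply mul_le_mul_of_nonneg_left _ hq.le
          linarith [hratio]
  -- telescoping
  calc ∑ i ∈ Finset.range m,
      (μ ({ω | p j ω ≤ q * ((i:ℝ)+1)} ∩ (E (i+1) \ E (i+2)))).toReal * (1/((i:ℝ)+1))
      = ∑ i ∈ Finset.range m,
        (μ (T (i+1) ∩ (E (i+1) \ E (i+2)))).toReal * (1/((i:ℝ)+1)) := by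
        apply Finset.sum_congr rfl
        intro i _
        have hTeq : {ω | p j ω ≤ q * ((i:ℝ)+1)} = T (i+1) := by
          ext ω
          simp only [hTdef, Set.mem_setOf_eq]
          push_cast
          norm_num
        rw [hTeq]
    _ ≤ ∑ i ∈ Finset.range m, q * (ρ (i+1) - ρ (i+2)) := Finset.sum_le_sum hkey
    _ = q * ∑ i ∈ Finset.range m, (ρ (i+1) - ρ (i+2)) := by rw [Finset.mul_sum]
    _ = q * (ρ 1 - ρ (m+1)) := by
        rw [Finset.sum_range_sub' (fun i => ρ (i+1)) m]
    _ ≤ q * 1 := by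
        apply mul_le_mul_of_nonneg_left _ hq.le
        linarith [hρle1 1, hρ0 (m+1)]
    _ = q := mul_one q

end Step3


/-- **Weighted SynthBH controls the FDR** at level
`(m₀/m)·α + (ε/m)·Σ_{j∈I₀} w_j`, and in particular at level `(m₀/m)·α + ε`. -/
theorem weighted_synthBH_controls_FDR
    {Ω : Type*} [MeasurableSpace Ω] (μ : Measure Ω) [IsProbabilityMeasure μ]
    (m : ℕ) (hm : 0 < m) (α ε : ℝ) (hα : α ∈ Set.Ioo (0 : ℝ) 1) (hε : ε ∈ Set.Ioo (0 : ℝ) 1)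
    (w : Fin m → ℝ) (hw : ∀ j, 0 ≤ w j) (hwsum : ∑ j, w j = (m : ℝ))
    (p pt : Fin m → Ω → ℝ)
    (hpmeas : ∀ j, Measurable (p j)) (hptmeas : ∀ j, Measurable (pt j))
    (hp01 : ∀ j ω, p j ω ∈ Set.Icc (0 : ℝ) 1) (hpt01 : ∀ j ω, pt j ω ∈ Set.Icc (0 : ℝ) 1)
    (I0 : Finset (Fin m))
    (hvalid : ∀ j ∈ I0, ∀ t ∈ Set.Icc (0 : ℝ) 1, μ {ω | p j ω ≤ t} ≤ ENNReal.ofReal t)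
    (hprds : PRDSOn μ (fun ω => Fin.append (fun j => p j ω) (fun j => pt j ω)) p I0) :
    (∫ ω, ((rejSetW m α ε w (fun j => p j ω) (fun j => pt j ω) ∩ I0).card : ℝ) /
        ((max (rejSetW m α ε w (fun j => p j ω) (fun j => pt j ω)).card 1 : ℕ) : ℝ) ∂μ ≤
      ((I0.card : ℝ) / m) * α + (ε / m) * ∑ j ∈ I0, w j) ∧
    (∫ ω, ((rejSetW m α ε w (fun j => p j ω) (fun j => pt j ω) ∩ I0).card : ℝ) /
        ((max (rejSetW m α ε w (fun j => p j ω) (fun j => pt j ω)).card 1 : ℕ) : ℝ) ∂μ ≤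
      ((I0.card : ℝ) / m) * α + ε) := by
  classical
  set R : Ω → Finset (Fin m) :=
    fun ω => rejSetW m α ε w (fun j => p j ω) (fun j => pt j ω) with hRdef
  set F : Ω → ℝ := fun ω => ((R ω ∩ I0).card : ℝ) / ((max (R ω).card 1 : ℕ) : ℝ) with hFdef
  -- the dominating function G
  set Sset : Fin m → ℕ → Set Ω := fun j i =>
    {ω | p j ω ≤ (α + w j * ε) / m * ((i:ℝ)+1)} ∩
      (Eset m α ε w p pt (i+1) \ Eset m α ε w p pt (i+2)) with hSdef
  set G : Ω → ℝ := fun ω => ∑ j ∈ I0, ∑ i ∈ Finset.range m,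
    (Sset j i).indicator (fun _ => 1/((i:ℝ)+1)) ω with hGdef
  have hEmeas : ∀ k, MeasurableSet (Eset m α ε w p pt k) := fun k => meas_E hpmeas hptmeas α k
  have hSmeas : ∀ j i, MeasurableSet (Sset j i) := by
    intro j i
    exact ((hpmeas j) measurableSet_Iic).inter ((hEmeas (i+1)).diff (hEmeas (i+2)))
  -- F as a finite sum of indicators
  have hFrep : F = fun ω => ∑ S : Finset (Fin m),
      ({ω' | R ω' = S}).indicator
        (fun _ => ((S ∩ I0).card : ℝ) / ((max S.card 1 : ℕ) : ℝ)) ω := by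
    funext ω
    rw [Finset.sum_eq_single_of_mem (R ω) (Finset.mem_univ _)]
    · simp [Set.indicator_of_mem, Set.mem_setOf_eq, hFdef, Nat.cast_max]
    · intro S _ hS
      apply Set.indicator_of_notMem
      simp only [Set.mem_setOf_eq]
      exact fun h => hS (h ▸ rfl)
  have hFint : Integrable F μ := by
    rw [hFrep]
    apply integrable_finset_sum
    intro S _
    exact (integrable_const _).indicator (meas_Req hpmeas hptmeas α S)
  have hGint' : ∀ j ∈ I0, ∀ i ∈ Finset.range m,
      Integrable (fun ω => (Sset j i).indicator (fun _ => 1/((i:ℝ)+1)) ω) μ := by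
    intro j _ i _
    exact (integrable_const _).indicator (hSmeas j i)
  have hGint : Integrable G μ := by
    rw [hGdef]
    apply integrable_finset_sum
    intro j hj
    exact integrable_finset_sum _ (hGint' j hj)
  -- pointwise bound F ≤ G
  have hFG : ∀ ω, F ω ≤ G ω := by
    intro ω
    have hGnonneg : ∀ j ∈ I0, ∀ i ∈ Finset.range m,
        0 ≤ (Sset j i).indicator (fun _ => 1/((i:ℝ)+1)) ω := by
      intro j _ i _
      apply Set.indicator_nonneg
      intro _ _
      positivity
    by_cases h0 : kStarW m α ε w (fun j => p j ω) (fun j => pt j ω) = 0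
    · have hRempty : R ω = ∅ := by
        show rejSetW m α ε w (fun j => p j ω) (fun j => pt j ω) = ∅
        unfold rejSetW
        rw [if_pos h0]
      have : F ω = 0 := by simp [hFdef, hRempty]
      rw [this]
      exact Finset.sum_nonneg (fun j hj => Finset.sum_nonneg (hGnonneg j hj))
    · set k : ℕ := kStarW m α ε w (fun j => p j ω) (fun j => pt j ω) with hkdef
      obtain ⟨hk1, hkm, _⟩ := kStarW_mem h0
      have hkR : k ≤ (R ω).card := kStarW_le_card_rejSetW m α ε w _ _
      have hkmax : (k:ℝ) ≤ ((max (R ω).card 1 : ℕ) : ℝ) := by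
        have : k ≤ max (R ω).card 1 := le_trans hkR (le_max_left _ _)
        exact_mod_cast this
      have hkpos : (0:ℝ) < (k:ℝ) := by
        have : 0 < k := hk1
        exact_mod_cast this
      have hcard : ((R ω ∩ I0).card : ℝ) = ∑ j ∈ I0, (if j ∈ R ω then (1:ℝ) else 0) := by
        have h1 : R ω ∩ I0 = I0.filter (fun j => j ∈ R ω) := by
          ext j
          simp [Finset.mem_inter, Finset.mem_filter, and_comm]
        rw [h1, Finset.card_filter]
        push_cast
        rfl
      have step1 : F ω ≤ ((R ω ∩ I0).card : ℝ) / (k:ℝ) := by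
        rw [hFdef]
        apply div_le_div_of_nonneg_left _ hkpos hkmax
        positivity
      have step2 : ((R ω ∩ I0).card : ℝ) / (k:ℝ)
          = ∑ j ∈ I0, (if j ∈ R ω then (1:ℝ)/(k:ℝ) else 0) := by
        rw [hcard, Finset.sum_div]
        apply Finset.sum_congr rfl
        intro j _
        split_ifs <;> simp
      have step3' : ∀ j ∈ I0, (if j ∈ R ω then (1:ℝ)/(k:ℝ) else 0)
          ≤ ∑ i ∈ Finset.range m, (Sset j i).indicator (fun _ => 1/((i:ℝ)+1)) ω := by
        intro j hj
        split_ifs with hjR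
        · -- ω ∈ Sset j (k-1)
          have hik : k - 1 ∈ Finset.range m := by
            simp only [Finset.mem_range]
            omega
          have hmem : ω ∈ Sset j (k-1) := by
            obtain ⟨_, hple⟩ := mem_rejSetW hε.1.le (hw j) hjR
            constructor
            · simp only [Set.mem_setOf_eq]
              have hcast : ((k - 1 : ℕ):ℝ) + 1 = (k:ℝ) := by
                have : (1:ℕ) ≤ k := hk1
                push_cast [this]
                ring
              rw [hcast]
              calc p j ω ≤ α * (k:ℝ) / m + (k:ℝ) * w j * ε / m := hple
              _ = (α + w j * ε) / m * (k:ℝ) := by ring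
            · constructor
              · simp only [Eset, Set.mem_setOf_eq]
                omega
              · simp only [Eset, Set.mem_setOf_eq]
                omega
          have hval : (Sset j (k-1)).indicator (fun _ => 1/(((k-1:ℕ):ℝ)+1)) ω
              = 1/(k:ℝ) := by
            rw [Set.indicator_of_mem hmem]
            congr 1
            have : (1:ℕ) ≤ k := hk1
            push_cast [this]
            ring
          calc (1:ℝ)/(k:ℝ)
              = (Sset j (k-1)).indicator (fun _ => 1/(((k-1:ℕ):ℝ)+1)) ω := hval.symm
            _ ≤ ∑ i ∈ Finset.range m, (Sset j i).indicator (fun _ => 1/((i:ℝ)+1)) ω :=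
              Finset.single_le_sum (f := fun i =>
                (Sset j i).indicator (fun _ => 1/((i:ℝ)+1)) ω)
                (fun i hi => hGnonneg j hj i hi) hik
        · exact Finset.sum_nonneg (hGnonneg j hj)
      calc F ω ≤ ((R ω ∩ I0).card : ℝ) / (k:ℝ) := step1
        _ = ∑ j ∈ I0, (if j ∈ R ω then (1:ℝ)/(k:ℝ) else 0) := step2
        _ ≤ G ω := Finset.sum_le_sum step3'
  -- integrate
  have hInt1 : ∫ ω, F ω ∂μ ≤ ∫ ω, G ω ∂μ := integral_mono hFint hGint hFG
  have hInt2 : ∫ ω, G ω ∂μ = ∑ j ∈ I0, ∑ i ∈ Finset.range m,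
      (μ (Sset j i)).toReal * (1/((i:ℝ)+1)) := by
    rw [hGdef, integral_finset_sum _ (fun j hj => integrable_finset_sum _ (hGint' j hj))]
    apply Finset.sum_congr rfl
    intro j hj
    rw [integral_finset_sum _ (hGint' j hj)]
    apply Finset.sum_congr rfl
    intro i _
    rw [integral_indicator_const _ (hSmeas j i)]
    simp [smul_eq_mul, Measure.real]
  have hInt3 : ∑ j ∈ I0, ∑ i ∈ Finset.range m,
      (μ (Sset j i)).toReal * (1/((i:ℝ)+1)) ≤ ∑ j ∈ I0, (α + w j * ε) / m := by
    apply Finset.sum_le_sum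
    intro j hj
    exact step3 μ hm hα hε hw hpmeas hptmeas I0 hvalid hprds j hj
  have hsum_eq : ∑ j ∈ I0, (α + w j * ε) / m
      = ((I0.card : ℝ) / m) * α + (ε / m) * ∑ j ∈ I0, w j := by
    have hm' : (m:ℝ) ≠ 0 := by
      have : (0:ℝ) < m := by exact_mod_cast hm
      linarith
    have hterm : ∀ j ∈ I0, (α + w j * ε) / m = α/m + (ε/m) * w j := by
      intro j _
      field_simp
    rw [Finset.sum_congr rfl hterm, Finset.sum_add_distrib, Finset.sum_const, ← Finset.mul_sum,
      nsmul_eq_mul]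
    ring
  have hmain : ∫ ω, F ω ∂μ ≤ ((I0.card : ℝ) / m) * α + (ε / m) * ∑ j ∈ I0, w j := by
    rw [← hsum_eq]
    calc ∫ ω, F ω ∂μ ≤ ∫ ω, G ω ∂μ := hInt1
      _ = _ := hInt2
      _ ≤ _ := hInt3
  constructor
  · exact hmain
  · refine le_trans hmain ?_
    have hsub : ∑ j ∈ I0, w j ≤ (m:ℝ) := by
      rw [← hwsum]
      exact Finset.sum_le_sum_of_subset_of_nonneg (Finset.subset_univ I0)
        (fun j _ _ => hw j)
    have hmpos : (0:ℝ) < m := by exact_mod_cast hm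
    have hεm : 0 ≤ ε / m := div_nonneg hε.1.le hmpos.le
    have : (ε / m) * ∑ j ∈ I0, w j ≤ (ε / m) * m := mul_le_mul_of_nonneg_left hsub hεm
    have hεmm : (ε / m) * m = ε := by field_simp
    linarith

end
end

section
/- Fix α ∈ (0,1), ε ≥ 0, and weights w_1,…,w_m ≥ 0. For each j set c_j = α/(α + w_j ε) and v_j^{(w)} = p_j ∧ (p̃_j ∨ (c_j·p_j)). Then for every j ∈ [m] and k ∈ [m], the weighted SynthBH step-k condition p̃_j^{k w_j ε/m} ≤ αk/m holds if and only if v_j^{(w)} ≤ αk/m; consequently weighted SynthBH coincides exactly with the Benjamini–Hochberg procedure at level α applied once to the static values (v_j^{(w)})_{j∈[m]}. -/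
noncomputable section

/-- The Benjamini–Hochberg rejection index at level `α` applied to values `v`. -/
def bhIndex (m : ℕ) (α : ℝ) (v : Fin m → ℝ) : ℕ :=
  ((Finset.Icc 1 m).filter (fun k => kthSmallest v k ≤ α * k / m)).sup id

/-- The Benjamini–Hochberg rejection set at level `α` applied to values `v`. -/
def bhRejSet (m : ℕ) (α : ℝ) (v : Fin m → ℝ) : Finset (Fin m) :=
  if bhIndex m α v = 0 then ∅
  else Finset.univ.filter (fun j => v j ≤ kthSmallest v (bhIndex m α v))

private lemma sorted_getD_le_iff {l : List ℝ} (hs : l.Pairwise (· ≤ ·)) {k : ℕ}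
    (hk1 : 1 ≤ k) (hk : k ≤ l.length) (t : ℝ) :
    l.getD (k - 1) 0 ≤ t ↔ k ≤ l.countP (fun x => decide (x ≤ t)) := by
  have hi : k - 1 < l.length := by omega
  have hg : l.getD (k - 1) 0 = l[k-1] := by
    simp [List.getD_eq_getElem?_getD, List.getElem?_eq_getElem hi]
  rw [hg]
  have hpw := List.pairwise_iff_getElem.mp hs
  constructor
  · intro h
    have h2 : (l.take k).countP (fun x => decide (x ≤ t)) = k := by
      rw [List.countP_eq_length.mpr, List.length_take]
      · omega
      · intro a ha
        rw [List.mem_iff_getElem] at ha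
        obtain ⟨i, hlt, rfl⟩ := ha
        have hik : i < k := by
          have := hlt; rw [List.length_take] at this; omega
        rw [List.getElem_take]
        simp only [decide_eq_true_eq]
        rcases Nat.lt_or_ge i (k - 1) with h' | h'
        · exact le_trans (hpw i (k-1) (by omega) hi h') h
        · have : i = k - 1 := by omega
          subst this; exact h
    calc k = (l.take k).countP (fun x => decide (x ≤ t)) := h2.symm
      _ ≤ (l.take k).countP (fun x => decide (x ≤ t))
            + (l.drop k).countP (fun x => decide (x ≤ t)) := Nat.le_add_right _ _
      _ = l.countP (fun x => decide (x ≤ t)) := by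
            rw [← List.countP_append, List.take_append_drop]
  · intro h
    by_contra hcon
    push_neg at hcon
    have hdrop : (l.drop (k-1)).countP (fun x => decide (x ≤ t)) = 0 := by
      rw [List.countP_eq_zero]
      intro a ha
      rw [List.mem_iff_getElem] at ha
      obtain ⟨i, hlt, rfl⟩ := ha
      rw [List.getElem_drop]
      simp only [decide_eq_true_eq, not_le]
      rcases Nat.eq_zero_or_pos i with h' | h'
      · subst h'; simpa using hcon
      · refine lt_of_lt_of_le hcon (hpw (k-1) (k-1+i) hi ?_ (by omega))
        have := hlt; rw [List.length_drop] at this; omega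
    have hle : l.countP (fun x => decide (x ≤ t)) ≤ k - 1 := by
      calc l.countP (fun x => decide (x ≤ t))
          = (l.take (k-1)).countP (fun x => decide (x ≤ t))
            + (l.drop (k-1)).countP (fun x => decide (x ≤ t)) := by
            rw [← List.countP_append, List.take_append_drop]
        _ ≤ (l.take (k-1)).length + 0 := by
            rw [hdrop]; exact Nat.add_le_add List.countP_le_length (Nat.le_refl 0)
        _ ≤ k - 1 := by rw [List.length_take]; omega
    omega

open Classical in
private lemma cnt_eq_countP {m : ℕ} (q : Fin m → Prop) [DecidablePred q] :
    (Finset.univ.filter q).card = List.countP (fun i => decide (q i)) (List.finRange m) := by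
  rw [Fin.univ_def]
  simp [Finset.filter, Finset.card, List.countP_eq_length_filter]

private lemma kth_le_iff {m : ℕ} (u : Fin m → ℝ) {k : ℕ} (hk1 : 1 ≤ k) (hk : k ≤ m)
    (t : ℝ) [DecidablePred (fun i => u i ≤ t)] :
    kthSmallest u k ≤ t ↔ k ≤ (Finset.univ.filter (fun i => u i ≤ t)).card := by
  have hs := List.pairwise_insertionSort (· ≤ ·) (List.ofFn u)
  have hperm := List.perm_insertionSort (· ≤ ·) (List.ofFn u)
  have hlen : (List.insertionSort (· ≤ ·) (List.ofFn u)).length = m := by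
    rw [List.length_insertionSort, List.length_ofFn]
  rw [kthSmallest, sorted_getD_le_iff hs hk1 (by omega) t,
    hperm.countP_eq, cnt_eq_countP, List.ofFn_eq_map, List.countP_map]
  have : ((fun x => decide (x ≤ t)) ∘ u) = (fun i => decide (u i ≤ t)) := by
    funext i; simp
  rw [this]


private lemma pointwise_iff {α ε wj pj ptj : ℝ} (hα : 0 < α) (hs : 0 ≤ wj * ε)
    {k m : ℕ} (hm : 0 < m) :
    (sp pj ptj (k * wj * ε / m) ≤ α * k / m ↔
      min pj (max ptj (α / (α + wj * ε) * pj)) ≤ α * k / m) := by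
  have hA : 0 < α + wj * ε := by linarith
  have hm' : (0:ℝ) < m := by exact_mod_cast hm
  have key : pj - (k : ℝ) * wj * ε / m ≤ α * k / m ↔
      α / (α + wj * ε) * pj ≤ α * k / m := by
    have e1 : pj - (k : ℝ) * wj * ε / m ≤ α * k / m ↔ pj * m ≤ α * k + k * (wj * ε) := by
      rw [sub_le_iff_le_add, ← add_div, le_div_iff₀ hm']
      constructor <;> intro h <;> nlinarith
    have e2 : α / (α + wj * ε) * pj ≤ α * k / m ↔ pj * m ≤ α * k + k * (wj * ε) := by
      rw [div_mul_eq_mul_div, div_le_div_iff₀ hA hm']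
      constructor <;> intro h <;> nlinarith
    rw [e1, e2]
  rw [sp]
  simp only [min_le_iff, max_le_iff, key]

/-- **Static reduction of weighted SynthBH to BH.**  With `c_j = α/(α + w_j ε)` and
`v_j^{(w)} = p_j ∧ (p̃_j ∨ (c_j·p_j))`: for every `j` and every `k ∈ [m]`, the weighted
step-`k` condition `p̃_j^{k w_j ε/m} ≤ αk/m` holds iff `v_j^{(w)} ≤ αk/m`; consequently
weighted SynthBH coincides exactly with BH at level `α` applied once to `(v_j^{(w)})`. -/
theorem weighted_synthBH_static_reduction
    (m : ℕ) (hm : 0 < m) (α ε : ℝ) (hα : α ∈ Set.Ioo (0 : ℝ) 1) (hε : 0 ≤ ε)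
    (w : Fin m → ℝ) (hw : ∀ j, 0 ≤ w j)
    (p pt : Fin m → ℝ)
    (hp : ∀ j, p j ∈ Set.Icc (0 : ℝ) 1) (hpt : ∀ j, pt j ∈ Set.Icc (0 : ℝ) 1) :
    (∀ j, ∀ k ∈ Finset.Icc 1 m,
      (sp (p j) (pt j) (k * w j * ε / m) ≤ α * k / m ↔
        min (p j) (max (pt j) (α / (α + w j * ε) * p j)) ≤ α * k / m)) ∧
    kStarW m α ε w p pt =
      bhIndex m α (fun j => min (p j) (max (pt j) (α / (α + w j * ε) * p j))) ∧
    rejSetW m α ε w p pt =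
      bhRejSet m α (fun j => min (p j) (max (pt j) (α / (α + w j * ε) * p j))) := by
  classical
  obtain ⟨hα0, hα1⟩ := hα
  have hpw : ∀ (j : Fin m) (k : ℕ), sp (p j) (pt j) (k * w j * ε / m) ≤ α * k / m ↔
      min (p j) (max (pt j) (α / (α + w j * ε) * p j)) ≤ α * k / m :=
    fun j k => pointwise_iff hα0 (mul_nonneg (hw j) hε) hm
  have hpw' : ∀ (j : Fin m) (k : ℕ), spVecW m ε w p pt k j ≤ α * k / m ↔
      min (p j) (max (pt j) (α / (α + w j * ε) * p j)) ≤ α * k / m := fun j k => hpw j k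
  refine ⟨fun j k _ => hpw j k, ?_⟩
  have hcond : ∀ k, 1 ≤ k → k ≤ m →
      (kthSmallest (spVecW m ε w p pt k) k ≤ α * k / m ↔
        kthSmallest (fun j => min (p j) (max (pt j) (α / (α + w j * ε) * p j))) k
          ≤ α * k / m) := by
    intro k hk1 hkm
    rw [kth_le_iff _ hk1 hkm, kth_le_iff _ hk1 hkm,
      Finset.filter_congr (fun i _ => hpw' i k)]
  have hK : kStarW m α ε w p pt =
      bhIndex m α (fun j => min (p j) (max (pt j) (α / (α + w j * ε) * p j))) := by
    rw [kStarW, bhIndex,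
      Finset.filter_congr (fun k hk => hcond k (Finset.mem_Icc.mp hk).1 (Finset.mem_Icc.mp hk).2)]
  refine ⟨hK, ?_⟩
  set v : Fin m → ℝ := fun j => min (p j) (max (pt j) (α / (α + w j * ε) * p j)) with hv
  set K := bhIndex m α v with hKdef
  by_cases hK0 : K = 0
  · rw [rejSetW, bhRejSet, hK, if_pos hK0, if_pos hK0]
  · have hmemK : K ∈ (Finset.Icc 1 m).filter (fun k => kthSmallest v k ≤ α * k / m) := by
      have hne : ((Finset.Icc 1 m).filter (fun k => kthSmallest v k ≤ α * k / m)).Nonempty := by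
        by_contra h
        rw [Finset.not_nonempty_iff_eq_empty] at h
        apply hK0
        rw [hKdef, bhIndex, h, Finset.sup_empty]
        rfl
      have hKmax : K = ((Finset.Icc 1 m).filter
          (fun k => kthSmallest v k ≤ α * k / m)).max' hne := by
        rw [hKdef, bhIndex, Finset.max'_eq_sup', Finset.sup'_eq_sup]
      rw [hKmax]
      exact Finset.max'_mem _ _
    obtain ⟨hKIcc, hKle⟩ := Finset.mem_filter.mp hmemK
    have hK1 : 1 ≤ K := (Finset.mem_Icc.mp hKIcc).1
    have hKm : K ≤ m := (Finset.mem_Icc.mp hKIcc).2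
    have hmax : ∀ k, 1 ≤ k → k ≤ m → kthSmallest v k ≤ α * k / m → k ≤ K := by
      intro k h1 h2 h3
      exact Finset.le_sup (f := id)
        (Finset.mem_filter.mpr ⟨Finset.mem_Icc.mpr ⟨h1, h2⟩, h3⟩)
    set t := α * K / m with ht
    have hcnt_v : (Finset.univ.filter (fun i => v i ≤ t)).card ≤ K := by
      by_contra hc
      push_neg at hc
      rcases Nat.lt_or_ge K m with hlt | hge
      · have h1 : kthSmallest v (K + 1) ≤ t :=
          (kth_le_iff v (by omega) (by omega) t).mpr hc
        have h2 : kthSmallest v (K + 1) ≤ α * (K + 1 : ℕ) / m := by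
          refine le_trans h1 ?_
          rw [ht]
          gcongr
          push_cast
          linarith
        have := hmax (K + 1) (by omega) (by omega) h2
        omega
      · have hcard := Finset.card_filter_le Finset.univ (fun i => v i ≤ t)
        rw [Finset.card_univ, Fintype.card_fin] at hcard
        omega
    have hτv : kthSmallest v K ≤ t := hKle
    have hτu : kthSmallest (spVecW m ε w p pt K) K ≤ t := (hcond K hK1 hKm).mpr hKle
    have rej_iff : ∀ (u : Fin m → ℝ), (∀ i, (u i ≤ t ↔ v i ≤ t)) → kthSmallest u K ≤ t →
        ∀ j, (u j ≤ kthSmallest u K ↔ u j ≤ t) := by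
      intro u hiff hτ j
      constructor
      · exact fun h => le_trans h hτ
      · intro h
        by_contra hcon
        push_neg at hcon
        have hS : K ≤ (Finset.univ.filter (fun i => u i ≤ kthSmallest u K)).card :=
          (kth_le_iff u hK1 hKm _).mp le_rfl
        have hsub : (Finset.univ.filter (fun i => u i ≤ kthSmallest u K)) ⊆
            (Finset.univ.filter (fun i => u i ≤ t)) := by
          intro x hx
          simp only [Finset.mem_filter] at hx ⊢
          exact ⟨hx.1, le_trans hx.2 hτ⟩
        have hjT : j ∈ Finset.univ.filter (fun i => u i ≤ t) := by
          simp only [Finset.mem_filter, Finset.mem_univ, true_and]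
          exact h
        have hjS : j ∉ Finset.univ.filter (fun i => u i ≤ kthSmallest u K) := by
          simp only [Finset.mem_filter, Finset.mem_univ, true_and]
          exact not_le.mpr hcon
        have hlt := Finset.card_lt_card (Finset.ssubset_iff_of_subset hsub |>.mpr ⟨j, hjT, hjS⟩)
        have hcongr : (Finset.univ.filter (fun i => u i ≤ t)).card =
            (Finset.univ.filter (fun i => v i ≤ t)).card := by
          rw [Finset.filter_congr (fun i _ => hiff i)]
        omega
    have hiffK : ∀ i, (spVecW m ε w p pt K i ≤ t ↔ v i ≤ t) := fun i => hpw' i K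
    have hu := rej_iff _ hiffK hτu
    have hv2 := rej_iff v (fun i => Iff.rfl) hτv
    rw [rejSetW, bhRejSet, hK, if_neg hK0, if_neg hK0]
    ext j
    simp only [Finset.mem_filter, Finset.mem_univ, true_and]
    rw [hu j, hv2 j, hiffK j]


end
end
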